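/- arXiv:2104.04698 — 4 statements merged into one kernel-verified Lean document; each statement's English description precedes it below -/
import Mathlib

section
/- Let U(θ,α,β) be as in the EWL scheme, |Ψ⟩ = (|00⟩+i|11⟩)/√2, and |Ψ01⟩ = (I⊗C1)|Ψ⟩ where C1 = [[0,i],[i,0]]. Then the maximum over θ ∈ [0,π], α,β ∈ [0,2π) of |⟨Ψ01|U(θ,α,β)⊗U(θ,α,β)|Ψ⟩|² equals 1/2. -/
/-- The maximally entangled state |Ψ⟩ = (|00⟩ + i|11⟩)/√2 as amplitudes. -/
noncomputable def PsiState : Fin 2 → Fin 2 → ℂ := fun k l =>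
  if k = 0 ∧ l = 0 then ((Real.sqrt 2)⁻¹ : ℝ)
  else if k = 1 ∧ l = 1 then Complex.I * ((Real.sqrt 2)⁻¹ : ℝ)
  else 0

/-- The EWL strategy U(θ,α,β). -/
noncomputable def EWLU (θ α β : ℝ) : Matrix (Fin 2) (Fin 2) ℂ :=
  !![Complex.exp (Complex.I * α) * Real.cos (θ/2),
     Complex.I * Complex.exp (Complex.I * β) * Real.sin (θ/2);
     Complex.I * Complex.exp (-(Complex.I * β)) * Real.sin (θ/2),
     Complex.exp (-(Complex.I * α)) * Real.cos (θ/2)]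

/-- Action of A ⊗ B on a two-qubit state. -/
noncomputable def tensorApply (A B : Matrix (Fin 2) (Fin 2) ℂ)
    (ψ : Fin 2 → Fin 2 → ℂ) : Fin 2 → Fin 2 → ℂ :=
  fun k l => ∑ k' : Fin 2, ∑ l' : Fin 2, A k k' * B l l' * ψ k' l'

/-- Inner product ⟨φ|ψ⟩ on ℂ²⊗ℂ². -/
noncomputable def inner2 (φ ψ : Fin 2 → Fin 2 → ℂ) : ℂ :=
  ∑ k : Fin 2, ∑ l : Fin 2, (starRingEnd ℂ) (φ k l) * ψ k l

/-- C₀ = I, C₁ = [[0,i],[i,0]]. -/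
noncomputable def Cop : Fin 2 → Matrix (Fin 2) (Fin 2) ℂ := fun k =>
  if k = 0 then 1 else !![0, Complex.I; Complex.I, 0]

/-- The basis states |Ψ_kl⟩ = (C_k ⊗ C_l)|Ψ⟩. -/
noncomputable def PsiBasis (k l : Fin 2) : Fin 2 → Fin 2 → ℂ :=
  tensorApply (Cop k) (Cop l) PsiState

/-
The amplitude ⟨Ψ₀₁|U ⊗ U|Ψ⟩ is real: it equals (cos(α-β) + sin(α-β)) · cos(θ/2) · sin(θ/2).
Its square is at most 2 · 1/4, since (cos γ + sin γ)² + (cos γ - sin γ)² = 2 and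
cos(θ/2) · sin(θ/2) = sin θ / 2; both bounds are attained at θ = π/2, α - β = π/4.
-/

open Complex

theorem inner2_PsiBasis_zero_one_tensorApply_self (U : Matrix (Fin 2) (Fin 2) ℂ) :
    inner2 (PsiBasis 0 1) (tensorApply U U PsiState)
      = -(1 + I) / 2 * (U 0 0 * U 1 0 + I * U 0 1 * U 1 1) := by
  have hr : (Real.sqrt 2 : ℂ)⁻¹ ^ 2 = 1 / 2 := by
    rw [inv_pow, ← ofReal_pow, Real.sq_sqrt zero_le_two]; norm_num
  simp only [inner2, PsiBasis, tensorApply, Cop, Fin.isValue, ↓reduceIte, one_ne_zero,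
    Matrix.of_apply, Matrix.cons_val', Matrix.cons_val_fin_one, PsiState, ofReal_inv, mul_ite,
    mul_zero, Fin.sum_univ_two, and_true, Matrix.cons_val_zero, zero_ne_one, and_false,
    Matrix.cons_val_one, add_zero, zero_add, map_add, map_mul, map_inv₀, conj_ofReal, conj_I,
    neg_mul, mul_neg, map_zero, zero_mul, neg_neg, neg_zero, ne_eq, not_false_eq_true,
    Matrix.one_apply_ne, Matrix.one_apply_eq, map_one, one_mul, neg_add_rev]
  linear_combination
    (I ^ 2 * U 0 0 * U 1 0 - I * U 0 0 * U 1 0 + (I ^ 3 - I ^ 2) * U 0 1 * U 1 1) * hr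
      + (U 0 0 * U 1 0 + I * U 0 1 * U 1 1) / 2 * I_sq

theorem EWLU_mul_add_I_mul (θ α β : ℝ) :
    EWLU θ α β 0 0 * EWLU θ α β 1 0 + I * EWLU θ α β 0 1 * EWLU θ α β 1 1
      = Real.cos (θ / 2) * Real.sin (θ / 2) *
          (I * exp ((α - β : ℝ) * I) - exp (-((α - β : ℝ) * I))) := by
  have hαβ : exp (I * α) * exp (-(I * β)) = exp ((α - β : ℝ) * I) := by
    rw [← exp_add]; push_cast; ring_nf
  have hβα : exp (I * β) * exp (-(I * α)) = exp (-((α - β : ℝ) * I)) := by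
    rw [← exp_add]; push_cast; ring_nf
  simp only [EWLU, Matrix.of_apply, Matrix.cons_val', Matrix.cons_val_zero,
    Matrix.cons_val_fin_one, Matrix.cons_val_one]
  linear_combination (I * Real.cos (θ / 2) * Real.sin (θ / 2)) * hαβ
    + (I * I * Real.cos (θ / 2) * Real.sin (θ / 2)) * hβα
    + (Real.cos (θ / 2) * Real.sin (θ / 2) * exp (-((α - β : ℝ) * I))) * I_sq

theorem Complex.cos_add_sin_eq_exp (γ : ℂ) :
    cos γ + sin γ = -(1 + I) / 2 * (I * exp (γ * I) - exp (-(γ * I))) := by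
  rw [← neg_mul, exp_mul_I, exp_mul_I, cos_neg, sin_neg]
  linear_combination (cos γ / 2 + sin γ / 2 + sin γ / 2 * (1 + I)) * I_sq

theorem inner2_PsiBasis_zero_one_EWLU (θ α β : ℝ) :
    inner2 (PsiBasis 0 1) (tensorApply (EWLU θ α β) (EWLU θ α β) PsiState)
      = ((Real.cos (α - β) + Real.sin (α - β)) * Real.cos (θ / 2) * Real.sin (θ / 2) : ℝ) := by
  rw [inner2_PsiBasis_zero_one_tensorApply_self, EWLU_mul_add_I_mul, ofReal_mul, ofReal_mul,
    ofReal_add, ofReal_cos (α - β), ofReal_sin (α - β), cos_add_sin_eq_exp]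
  ring

theorem Real.cos_add_sin_sq_le_two (x : ℝ) : (cos x + sin x) ^ 2 ≤ 2 := by
  nlinarith [sin_sq_add_cos_sq x, sq_nonneg (cos x - sin x)]

theorem Real.cos_mul_sin_sq_le (x : ℝ) : (cos x * sin x) ^ 2 ≤ 1 / 4 := by
  nlinarith [sin_sq_add_cos_sq x, sq_nonneg (cos x ^ 2 - sin x ^ 2)]

theorem stmt_11 :
    IsGreatest {x : ℝ | ∃ θ α β : ℝ, θ ∈ Set.Icc 0 Real.pi ∧
        α ∈ Set.Ico 0 (2 * Real.pi) ∧ β ∈ Set.Ico 0 (2 * Real.pi) ∧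
        x = ‖inner2 (PsiBasis 0 1)
              (tensorApply (EWLU θ α β) (EWLU θ α β) PsiState)‖ ^ 2}
      (1/2) := by
  have hπ := Real.pi_pos
  refine ⟨⟨Real.pi / 2, Real.pi / 4, 0, ⟨by linarith, by linarith⟩, ⟨by linarith, by linarith⟩,
    ⟨le_rfl, by linarith⟩, ?_⟩, ?_⟩
  · rw [inner2_PsiBasis_zero_one_EWLU, norm_real, Real.norm_eq_abs, sq_abs,
      show Real.pi / 2 / 2 = Real.pi / 4 by ring, sub_zero, Real.cos_pi_div_four,
      Real.sin_pi_div_four,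
      show ((√2 / 2 + √2 / 2) * (√2 / 2) * (√2 / 2)) ^ 2 = (√2 ^ 2) ^ 3 / 16 by ring,
      Real.sq_sqrt zero_le_two]
    norm_num
  · rintro x ⟨θ, α, β, -, -, -, rfl⟩
    rw [inner2_PsiBasis_zero_one_EWLU, norm_real, Real.norm_eq_abs, sq_abs, mul_assoc, mul_pow]
    calc (Real.cos (α - β) + Real.sin (α - β)) ^ 2 * (Real.cos (θ / 2) * Real.sin (θ / 2)) ^ 2
        ≤ 2 * (1 / 4) := mul_le_mul (Real.cos_add_sin_sq_le_two _) (Real.cos_mul_sin_sq_le _)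
          (sq_nonneg _) zero_le_two
      _ = 1 / 2 := by norm_num
end

section
/- If a unitary U ∈ SU(2) satisfies |⟨Ψ00|U⊗U|Ψ⟩|² = 1, then |⟨Ψ01|U⊗U|Ψ⟩|² = 0; conversely if |⟨Ψ01|U⊗U|Ψ⟩|² = 1/2, then |⟨Ψ00|U⊗U|Ψ⟩|² = 0. -/
open Complex Matrix ComplexConjugate

theorem Matrix.star_eq_adjugate_of_mem_specialUnitaryGroup {n α : Type*} [Fintype n]
    [DecidableEq n] [CommRing α] [StarRing α] {A : Matrix n n α}
    (hA : A ∈ specialUnitaryGroup n α) : star A = adjugate A := by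
  rw [mem_specialUnitaryGroup_iff, mem_unitaryGroup_iff'] at hA
  rw [← inv_eq_left_inv hA.1, inv_def, hA.2, Ring.inverse_one, one_smul]

theorem Matrix.specialUnitaryGroup_fin_two_apply {A : Matrix (Fin 2) (Fin 2) ℂ}
    (hA : A ∈ specialUnitaryGroup (Fin 2) ℂ) :
    A 1 0 = -conj (A 0 1) ∧ A 1 1 = conj (A 0 0) := by
  have h := star_eq_adjugate_of_mem_specialUnitaryGroup hA
  have h10 := congrFun (congrFun h 0) 1
  have h11 := congrFun (congrFun h 0) 0
  simp only [adjugate_fin_two, star_apply, of_apply, cons_val', cons_val_zero, cons_val_one,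
    RCLike.star_def] at h10 h11
  exact ⟨by simpa using congrArg conj h10, h11.symm⟩

theorem Matrix.specialUnitaryGroup_fin_two_normSq {A : Matrix (Fin 2) (Fin 2) ℂ}
    (hA : A ∈ specialUnitaryGroup (Fin 2) ℂ) : normSq (A 0 0) + normSq (A 0 1) = 1 := by
  have h := congrFun (congrFun
    (mem_unitaryGroup_iff.1 (specialUnitaryGroup_le_unitaryGroup hA)) 0) 0
  simp only [mul_apply, Fin.sum_univ_two, star_apply, RCLike.star_def, mul_conj, one_apply_eq] at h
  exact_mod_cast h

lemma ofReal_inv_sqrt_two_sq : ((√2 : ℝ) : ℂ)⁻¹ ^ 2 = 1 / 2 := by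
  rw [inv_pow, ← ofReal_pow, Real.sq_sqrt zero_le_two]
  norm_num

lemma inner2_PsiBasis_zero_zero (M : Matrix (Fin 2) (Fin 2) ℂ) :
    inner2 (PsiBasis 0 0) (tensorApply M M PsiState) =
      (M 0 0 ^ 2 + I * M 0 1 ^ 2 - I * M 1 0 ^ 2 + M 1 1 ^ 2) / 2 := by
  simp only [inner2, PsiBasis, tensorApply, Cop, Fin.isValue, ↓reduceIte, PsiState, ofReal_inv,
    mul_ite, mul_zero, Fin.sum_univ_two, and_true, zero_ne_one, and_false, one_ne_zero, add_zero,
    zero_add, map_add, map_mul, map_inv₀, conj_ofReal, conj_I, neg_mul, mul_neg, one_apply_eq,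
    map_one, mul_one, ne_eq, not_false_eq_true, one_apply_ne, map_zero, zero_mul, neg_zero, one_mul]
  linear_combination (M 0 0 ^ 2 + I * M 0 1 ^ 2 - I * M 1 0 ^ 2 + M 1 1 ^ 2) *
    ofReal_inv_sqrt_two_sq - ((√2 : ℝ) : ℂ)⁻¹ ^ 2 * M 1 1 ^ 2 * I_sq

lemma inner2_PsiBasis_zero_one (M : Matrix (Fin 2) (Fin 2) ℂ) :
    inner2 (PsiBasis 0 1) (tensorApply M M PsiState) =
      -(1 + I) / 2 * (M 0 0 * M 1 0 + I * M 0 1 * M 1 1) := by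
  simp only [inner2, PsiBasis, tensorApply, Cop, Fin.isValue, ↓reduceIte, one_ne_zero, of_apply,
    cons_val', cons_val_fin_one, PsiState, ofReal_inv, mul_ite, mul_zero, Fin.sum_univ_two,
    and_true, cons_val_zero, zero_ne_one, and_false, cons_val_one, add_zero, zero_add, map_add,
    map_mul, map_inv₀, conj_ofReal, conj_I, neg_mul, mul_neg, map_zero, zero_mul, neg_neg, neg_zero,
    ne_eq, not_false_eq_true, one_apply_ne, one_apply_eq, map_one, one_mul, neg_add_rev]
  linear_combination (M 0 0 * M 1 0 + I * M 0 1 * M 1 1) *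
    (-(1 + I) * ofReal_inv_sqrt_two_sq + ((√2 : ℝ) : ℂ)⁻¹ ^ 2 * I_sq)

lemma sq_norm_inner2_PsiBasis_zero_zero {U : Matrix (Fin 2) (Fin 2) ℂ}
    (hU : U ∈ specialUnitaryGroup (Fin 2) ℂ) :
    ‖inner2 (PsiBasis 0 0) (tensorApply U U PsiState)‖ ^ 2 =
      ((U 0 0).re ^ 2 - (U 0 0).im ^ 2 - 2 * (U 0 1).re * (U 0 1).im) ^ 2 := by
  obtain ⟨h10, h11⟩ := specialUnitaryGroup_fin_two_apply hU
  rw [inner2_PsiBasis_zero_zero, h10, h11, Complex.sq_norm, normSq_apply]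
  simp only [Fin.isValue, pow_two, mul_neg, neg_mul, neg_neg, div_ofNat_re, add_re, sub_re, mul_re,
    I_re, zero_mul, I_im, mul_im, one_mul, zero_sub, neg_add_rev, conj_re, conj_im, div_ofNat_im,
    add_im, sub_im, zero_add, add_sub_cancel_right]
  ring

lemma sq_norm_inner2_PsiBasis_zero_one {U : Matrix (Fin 2) (Fin 2) ℂ}
    (hU : U ∈ specialUnitaryGroup (Fin 2) ℂ) :
    ‖inner2 (PsiBasis 0 1) (tensorApply U U PsiState)‖ ^ 2 =
      ((U 0 0).re * (U 0 1).re + (U 0 0).re * (U 0 1).im + (U 0 0).im * (U 0 1).im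
        - (U 0 0).im * (U 0 1).re) ^ 2 := by
  obtain ⟨h10, h11⟩ := specialUnitaryGroup_fin_two_apply hU
  rw [inner2_PsiBasis_zero_one, h10, h11, Complex.sq_norm, normSq_apply]
  simp only [neg_add_rev, Fin.isValue, mul_neg, mul_re, div_ofNat_re, add_re, neg_re, I_re,
    neg_zero, one_re, zero_add, conj_re, conj_im, sub_neg_eq_add, zero_mul, I_im, one_mul, zero_sub,
    neg_mul, mul_im, div_ofNat_im, add_im, neg_im, one_im, add_zero, neg_neg, pow_two]
  ring

lemma ewl_amplitude_sq_le (p q r s : ℝ) :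
    (p ^ 2 - q ^ 2 - 2 * r * s) ^ 2 + 2 * (p * r + p * s + q * s - q * r) ^ 2 ≤
      (p ^ 2 + q ^ 2 + r ^ 2 + s ^ 2) ^ 2 := by
  have h : (p ^ 2 - q ^ 2 - 2 * r * s) ^ 2 + 2 * (p * r + p * s + q * s - q * r) ^ 2 +
      (2 * p * q + r ^ 2 - s ^ 2) ^ 2 = (p ^ 2 + q ^ 2 + r ^ 2 + s ^ 2) ^ 2 := by ring
  linarith [sq_nonneg (2 * p * q + r ^ 2 - s ^ 2)]

lemma sq_norm_inner2_PsiBasis_zero_zero_add_two_mul_le {U : Matrix (Fin 2) (Fin 2) ℂ}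
    (hU : U ∈ specialUnitaryGroup (Fin 2) ℂ) :
    ‖inner2 (PsiBasis 0 0) (tensorApply U U PsiState)‖ ^ 2 +
      2 * ‖inner2 (PsiBasis 0 1) (tensorApply U U PsiState)‖ ^ 2 ≤ 1 := by
  have hnorm : (U 0 0).re ^ 2 + (U 0 0).im ^ 2 + (U 0 1).re ^ 2 + (U 0 1).im ^ 2 = 1 := by
    have h := specialUnitaryGroup_fin_two_normSq hU
    rw [normSq_apply, normSq_apply] at h
    linear_combination h
  rw [sq_norm_inner2_PsiBasis_zero_zero hU, sq_norm_inner2_PsiBasis_zero_one hU]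
  exact (ewl_amplitude_sq_le _ _ _ _).trans_eq (by rw [hnorm, one_pow])

theorem stmt_13 (U : Matrix.specialUnitaryGroup (Fin 2) ℂ) :
    (norm (inner2 (PsiBasis 0 0)
        (tensorApply (U : Matrix (Fin 2) (Fin 2) ℂ) (U : Matrix (Fin 2) (Fin 2) ℂ)
          PsiState)) ^ 2 = 1 →
      norm (inner2 (PsiBasis 0 1)
        (tensorApply (U : Matrix (Fin 2) (Fin 2) ℂ) (U : Matrix (Fin 2) (Fin 2) ℂ)
          PsiState)) ^ 2 = 0) ∧
    (norm (inner2 (PsiBasis 0 1)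
        (tensorApply (U : Matrix (Fin 2) (Fin 2) ℂ) (U : Matrix (Fin 2) (Fin 2) ℂ)
          PsiState)) ^ 2 = 1/2 →
      norm (inner2 (PsiBasis 0 0)
        (tensorApply (U : Matrix (Fin 2) (Fin 2) ℂ) (U : Matrix (Fin 2) (Fin 2) ℂ)
          PsiState)) ^ 2 = 0) := by
  have hle := sq_norm_inner2_PsiBasis_zero_zero_add_two_mul_le U.2
  constructor <;> intro h <;>
    linarith [sq_nonneg ‖inner2 (PsiBasis 0 0) (tensorApply U U PsiState)‖,
      sq_nonneg ‖inner2 (PsiBasis 0 1) (tensorApply U U PsiState)‖]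
end

section
/- If a00 ≥ a11 and a01 + a10 - 2a00 > 0, then (a01+a10)/2 - ((a01+a10)² - 4a00a11)/(4(a01+a10-a00-a11)) = (a01+a10-2a00)(a01+a10-2a11)/(4(a01+a10-a00-a11)) > 0. -/
theorem stmt_14 (a00 a01 a10 a11 : ℝ) (h : a00 ≥ a11)
    (h1 : a01 + a10 - 2 * a00 > 0) :
    (a01 + a10) / 2 - ((a01 + a10)^2 - 4 * a00 * a11) / (4 * (a01 + a10 - a00 - a11))
      = (a01 + a10 - 2 * a00) * (a01 + a10 - 2 * a11) / (4 * (a01 + a10 - a00 - a11)) ∧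
    0 < (a01 + a10 - 2 * a00) * (a01 + a10 - 2 * a11) / (4 * (a01 + a10 - a00 - a11)) := by
  have hd : a01 + a10 - a00 - a11 > 0 := by linarith
  constructor
  · field_simp
    ring
  · apply div_pos
    · apply mul_pos h1; linarith
    · linarith
end

section
/- In the EWL scheme applied to a symmetric 2×2 game (i.e., b_kl = a_lk), the payoff functions satisfy v1(U1⊗U2) = v2(U2⊗U1) for all U1, U2 ∈ SU(2); that is, the EWL quantum game is symmetric. -/
/- The state |Ψ⟩ is invariant under exchanging the two qubits, and the exchange turns A ⊗ B into
B ⊗ A. Hence ⟨Ψkl|U1⊗U2|Ψ⟩ = ⟨Ψlk|U2⊗U1|Ψ⟩, and reindexing the sum by (k, l) ↦ (l, k) matches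
the payoff of player 1 with that of player 2 in the symmetric game. -/

lemma tensorApply_swap (A B : Matrix (Fin 2) (Fin 2) ℂ) (ψ : Fin 2 → Fin 2 → ℂ) :
    tensorApply B A (fun k l => ψ l k) = fun k l => tensorApply A B ψ l k := by
  funext k l
  simp only [tensorApply]
  rw [Finset.sum_comm]
  exact Finset.sum_congr rfl fun _ _ => Finset.sum_congr rfl fun _ _ => by ring

lemma inner2_swap (φ ψ : Fin 2 → Fin 2 → ℂ) :
    inner2 (fun k l => φ l k) (fun k l => ψ l k) = inner2 φ ψ := by
  simp only [inner2]
  exact Finset.sum_comm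

lemma PsiState_swap : (fun k l => PsiState l k) = PsiState := by
  funext k l
  fin_cases k <;> fin_cases l <;> simp [PsiState]

lemma inner2_PsiBasis_tensorApply_swap (k l : Fin 2) (A B : Matrix (Fin 2) (Fin 2) ℂ) :
    inner2 (PsiBasis k l) (tensorApply A B PsiState)
      = inner2 (PsiBasis l k) (tensorApply B A PsiState) := by
  rw [← inner2_swap, PsiBasis, PsiBasis, ← tensorApply_swap, ← tensorApply_swap, PsiState_swap]

theorem stmt_17 (a : Fin 2 → Fin 2 → ℝ)
    (U1 U2 : Matrix.specialUnitaryGroup (Fin 2) ℂ) :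
    ∑ k : Fin 2, ∑ l : Fin 2, a k l *
        ‖(inner2 (PsiBasis k l)
          (tensorApply (U1 : Matrix (Fin 2) (Fin 2) ℂ) (U2 : Matrix (Fin 2) (Fin 2) ℂ)
            PsiState))‖ ^ 2
      = ∑ k : Fin 2, ∑ l : Fin 2, a l k *
        ‖(inner2 (PsiBasis k l)
          (tensorApply (U2 : Matrix (Fin 2) (Fin 2) ℂ) (U1 : Matrix (Fin 2) (Fin 2) ℂ)
            PsiState))‖ ^ 2 := by
  rw [Finset.sum_comm]
  refine Finset.sum_congr rfl fun k _ => Finset.sum_congr rfl fun l _ => ?_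
  rw [inner2_PsiBasis_tensorApply_swap l k]
end
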